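/- Under the FedOMD setting, the static regret against the comparator x^* satisfies Σ_{t=1}^T (F^{(t)}(x^{(t)}) − F^{(t)}(x^*)) ≤ √T·B_φ(x^*; x^{(1)}) + (μ²/2)·√T. -/

import Mathlib

/-!
Each client update is a mirror-descent step from `x t` with step size `1 / √T`. Convexity of
`F t n`, first-order optimality of the step and the three-point identity for Bregman divergences
bound the client's excess loss at `x t` by `μ² / (2√T) + √T (B(x*, x t) − B(x*, xloc n))`; the
strong convexity of `φ` absorbs the gradient term through `μ r ≤ μ² / (2c) + c r² / 2`.
Averaging over clients with the weights `p t`, the convexity of `B(x*, ·)` replaces the local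
iterates by `x (t + 1)`, and the sum over rounds telescopes.
-/

open Finset RealInnerProductSpace

theorem mul_le_sq_div_add_mul_half_sq {c : ℝ} (hc : 0 < c) (μ r : ℝ) :
    μ * r ≤ μ ^ 2 / (2 * c) + c * ((1 / 2) * r ^ 2) := by
  have h : μ ^ 2 / (2 * c) + c * ((1 / 2) * r ^ 2) - μ * r = (μ - c * r) ^ 2 / (2 * c) := by
    field_simp
    ring
  linarith [show 0 ≤ (μ - c * r) ^ 2 / (2 * c) by positivity]

section InnerProductSpace

variable {E : Type*} [NormedAddCommGroup E] [InnerProductSpace ℝ E]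

theorem ConvexOn.add_inner_sub_le_of_hasGradientAt [CompleteSpace E] {f : E → ℝ} {g z : E}
    (hf : ConvexOn ℝ Set.univ f) (hg : HasGradientAt f g z) (u : E) :
    f z + ⟪g, u - z⟫ ≤ f u := by
  set L := AffineMap.lineMap (k := ℝ) z u
  have hfL : HasDerivAt (f ∘ L) ⟪g, u - z⟫ 0 := by
    have := (show L 0 = z by simp [L]) ▸ hg.hasFDerivAt
    simpa only [InnerProductSpace.toDual_apply_apply] using
      this.comp_hasDerivAt 0 AffineMap.hasDerivAt_lineMap
  have := (hf.comp_affineMap L).le_slope_of_hasDerivAt (Set.mem_univ 0) (Set.mem_univ 1)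
    zero_lt_one hfL
  simp only [slope_def_field, Function.comp_apply, AffineMap.lineMap_apply_one,
    AffineMap.lineMap_apply_zero, sub_zero, div_one, L] at this
  linarith

def bregman (φ : E → ℝ) (Gφ : E → E) (y z : E) : ℝ := φ y - φ z - ⟪Gφ z, y - z⟫

variable {φ : E → ℝ} {Gφ : E → E}

theorem half_sq_norm_sub_le_bregman
    (hφ : ∀ y z, φ z + ⟪Gφ z, y - z⟫ + (1 / 2) * ‖y - z‖ ^ 2 ≤ φ y) (y z : E) :
    (1 / 2) * ‖y - z‖ ^ 2 ≤ bregman φ Gφ y z := by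
  unfold bregman
  linarith [hφ y z]

theorem bregman_nonneg
    (hφ : ∀ y z, φ z + ⟪Gφ z, y - z⟫ + (1 / 2) * ‖y - z‖ ^ 2 ≤ φ y) (y z : E) :
    0 ≤ bregman φ Gφ y z :=
  le_trans (by positivity) (half_sq_norm_sub_le_bregman hφ y z)

theorem bregman_three_point (u w z : E) :
    bregman φ Gφ u z - bregman φ Gφ u w - bregman φ Gφ w z = ⟪Gφ w - Gφ z, u - w⟫ := by
  simp only [bregman, inner_sub_left, inner_sub_right]
  ring

variable [CompleteSpace E]

theorem hasFDerivAt_inner_const (g w : E) :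
    HasFDerivAt (fun y : E => ⟪g, y⟫) (InnerProductSpace.toDual ℝ E g : StrongDual ℝ E) w :=
  (InnerProductSpace.toDual ℝ E g).hasFDerivAt

theorem add_smul_sub_eq_zero_of_isMinOn_bregman (hφ : ∀ y, HasGradientAt φ (Gφ y) y)
    {g z w : E} {c : ℝ}
    (hmin : IsMinOn (fun y => ⟪g, y⟫ + c * bregman φ Gφ y z) Set.univ w) :
    g + c • (Gφ w - Gφ z) = 0 := by
  have hB : HasFDerivAt (fun y => bregman φ Gφ y z)
      (InnerProductSpace.toDual ℝ E (Gφ w - Gφ z) : StrongDual ℝ E) w := by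
    rw [map_sub]
    refine (((hφ w).hasFDerivAt.sub_const (φ z)).sub
      ((hasFDerivAt_inner_const (Gφ z) w).sub_const ⟪Gφ z, z⟫)).congr_of_eventuallyEq
      (.of_forall fun y => ?_)
    simp only [bregman, inner_sub_right, Pi.sub_apply]
  have h0 := (hmin.isLocalMin Filter.univ_mem).hasFDerivAt_eq_zero ((hasFDerivAt_inner_const g w).add (hB.const_mul c))
  rw [← map_smul, ← map_add] at h0
  exact (InnerProductSpace.toDual ℝ E).map_eq_zero_iff.mp h0

theorem inner_sub_le_of_isMinOn_bregman (hφ : ∀ y, HasGradientAt φ (Gφ y) y)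
    (hsc : ∀ y z, φ z + ⟪Gφ z, y - z⟫ + (1 / 2) * ‖y - z‖ ^ 2 ≤ φ y)
    {g z w : E} {c μ : ℝ} (hc : 0 < c) (hg : ‖g‖ ≤ μ)
    (hmin : IsMinOn (fun y => ⟪g, y⟫ + c * bregman φ Gφ y z) Set.univ w) (u : E) :
    ⟪g, z - u⟫ ≤ μ ^ 2 / (2 * c) + c * (bregman φ Gφ u z - bregman φ Gφ u w) := by
  have hg_eq : g = -(c • (Gφ w - Gφ z)) :=
    eq_neg_of_add_eq_zero_left (add_smul_sub_eq_zero_of_isMinOn_bregman hφ hmin)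
  have hfar : ⟪g, w - u⟫ = c * (bregman φ Gφ u z - bregman φ Gφ u w - bregman φ Gφ w z) := by
    rw [bregman_three_point, hg_eq, inner_neg_left, real_inner_smul_left, ← mul_neg,
      ← inner_neg_right, neg_sub]
  have hnear : ⟪g, z - w⟫ ≤ μ ^ 2 / (2 * c) + c * bregman φ Gφ w z :=
    calc ⟪g, z - w⟫ ≤ ‖g‖ * ‖w - z‖ := norm_sub_rev z w ▸ real_inner_le_norm g (z - w)
      _ ≤ μ * ‖w - z‖ := by gcongr
      _ ≤ μ ^ 2 / (2 * c) + c * ((1 / 2) * ‖w - z‖ ^ 2) := mul_le_sq_div_add_mul_half_sq hc _ _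
      _ ≤ μ ^ 2 / (2 * c) + c * bregman φ Gφ w z := by
        gcongr; exact half_sq_norm_sub_le_bregman hsc w z
  have hsplit : ⟪g, z - u⟫ = ⟪g, z - w⟫ + ⟪g, w - u⟫ := by
    rw [← inner_add_right, sub_add_sub_cancel]
  linarith

theorem ConvexOn.sub_le_of_isMinOn_bregman
    (hφ : ∀ y, HasGradientAt φ (Gφ y) y)
    (hsc : ∀ y z, φ z + ⟪Gφ z, y - z⟫ + (1 / 2) * ‖y - z‖ ^ 2 ≤ φ y)
    {f : E → ℝ} {g z w : E} {c μ : ℝ} (hf : ConvexOn ℝ Set.univ f) (hc : 0 < c)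
    (hfg : HasGradientAt f g z) (hg : ‖g‖ ≤ μ)
    (hmin : IsMinOn (fun y => ⟪g, y⟫ + c * bregman φ Gφ y z) Set.univ w) (u : E) :
    f z - f u ≤ μ ^ 2 / (2 * c) + c * (bregman φ Gφ u z - bregman φ Gφ u w) := by
  have hlin := hf.add_inner_sub_le_of_hasGradientAt hfg u
  have hstep := inner_sub_le_of_isMinOn_bregman hφ hsc hc hg hmin u
  rw [← neg_sub u z, inner_neg_right] at hstep
  linarith

end InnerProductSpace

theorem Finset.sum_fin_equivFin_symm {α M : Type*} [AddCommMonoid M] (s : Finset α)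
    (f : α → M) : ∑ i : Fin s.card, f (s.equivFin.symm i) = ∑ a ∈ s, f a := by
  rw [← s.sum_coe_sort f]
  exact s.equivFin.symm.sum_comp fun a : s => f a

theorem map_sum_smul_le_of_forall_fin {M ι : Type*} [AddCommMonoid M] [Module ℝ M] {h : M → ℝ}
    (hh : ∀ (j : ℕ) (z : Fin j → M) (w : Fin j → ℝ), (∀ i, 0 ≤ w i) → (∀ i, w i ≤ 1) →
      ∑ i, w i = 1 → h (∑ i, w i • z i) ≤ ∑ i, w i * h (z i))
    (s : Finset ι) {w : ι → ℝ} (h0 : ∀ i ∈ s, 0 ≤ w i) (h1 : ∀ i ∈ s, w i ≤ 1)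
    (hs : ∑ i ∈ s, w i = 1) (z : ι → M) :
    h (∑ i ∈ s, w i • z i) ≤ ∑ i ∈ s, w i * h (z i) := by
  have := hh s.card (fun i => z (s.equivFin.symm i)) (fun i => w (s.equivFin.symm i))
    (fun i => h0 _ (Subtype.prop _)) (fun i => h1 _ (Subtype.prop _)) (by rwa [← s.sum_fin_equivFin_symm w] at hs)
  simpa only [s.sum_fin_equivFin_symm fun i => w i • z i,
    s.sum_fin_equivFin_symm fun i => w i * h (z i)] using this

theorem sum_mul_le_of_le_add_mul_sub {ι : Type*} {s : Finset ι} {p a b : ι → ℝ} {K c r₀ r₁ : ℝ}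
    (hp0 : ∀ n ∈ s, 0 ≤ p n) (hp : ∑ n ∈ s, p n = 1) (hc : 0 ≤ c)
    (hab : ∀ n ∈ s, a n ≤ K + c * (r₀ - b n)) (hr : r₁ ≤ ∑ n ∈ s, p n * b n) :
    ∑ n ∈ s, p n * a n ≤ K + c * (r₀ - r₁) :=
  calc ∑ n ∈ s, p n * a n ≤ ∑ n ∈ s, p n * (K + c * (r₀ - b n)) :=
        sum_le_sum fun n hn => mul_le_mul_of_nonneg_left (hab n hn) (hp0 n hn)
    _ = (K + c * r₀) * ∑ n ∈ s, p n - c * ∑ n ∈ s, p n * b n := by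
        rw [mul_sum, mul_sum, ← sum_sub_distrib]
        exact sum_congr rfl fun n _ => by ring
    _ ≤ K + c * (r₀ - r₁) := by
        rw [hp]
        nlinarith [mul_le_mul_of_nonneg_left hr hc]

theorem sum_Icc_le_of_le_add_mul_sub {T : ℕ} {r D : ℕ → ℝ} {K c : ℝ} (hc : 0 ≤ c)
    (hD : 0 ≤ D (T + 1)) (h : ∀ t ∈ Icc 1 T, r t ≤ K + c * (D t - D (t + 1))) :
    ∑ t ∈ Icc 1 T, r t ≤ T * K + c * D 1 := by
  have htel : ∑ t ∈ Icc 1 T, (D t - D (t + 1)) = D 1 - D (T + 1) := by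
    rcases Nat.eq_zero_or_pos T with rfl | hT
    · simp
    · rw [← neg_sub (D (T + 1)) (D 1), ← sum_Icc_sub hT D, ← sum_neg_distrib]
      simp only [neg_sub]
  calc ∑ t ∈ Icc 1 T, r t ≤ ∑ t ∈ Icc 1 T, (K + c * (D t - D (t + 1))) := sum_le_sum h
    _ = T * K + c * (D 1 - D (T + 1)) := by
        rw [sum_add_distrib, ← mul_sum, htel, sum_const, Nat.card_Icc, Nat.add_sub_cancel,
          nsmul_eq_mul]
    _ ≤ T * K + c * D 1 := by nlinarith [mul_nonneg hc hD]

theorem fedomd_static_regret_general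
    {d : ℕ} {ι : Type*} (N : Finset ι) (T : ℕ) (hT : 1 ≤ T) (μ : ℝ)
    (F : ℕ → ι → EuclideanSpace ℝ (Fin d) → ℝ)
    (G : ℕ → ι → EuclideanSpace ℝ (Fin d) → EuclideanSpace ℝ (Fin d))
    (p : ℕ → ι → ℝ)
    (Fg : ℕ → EuclideanSpace ℝ (Fin d) → ℝ)
    (φ : EuclideanSpace ℝ (Fin d) → ℝ)
    (Gφ : EuclideanSpace ℝ (Fin d) → EuclideanSpace ℝ (Fin d))
    (B : EuclideanSpace ℝ (Fin d) → EuclideanSpace ℝ (Fin d) → ℝ)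
    (x : ℕ → EuclideanSpace ℝ (Fin d))
    (xloc : ℕ → ι → EuclideanSpace ℝ (Fin d))
    (xs : EuclideanSpace ℝ (Fin d))
    (hconv : ∀ t ∈ Icc 1 T, ∀ n ∈ N, ConvexOn ℝ Set.univ (F t n))
    (hgrad : ∀ t ∈ Icc 1 T, ∀ n ∈ N, ∀ y, HasGradientAt (F t n) (G t n y) y)
    (hgradbd : ∀ t ∈ Icc 1 T, ∀ n ∈ N, ∀ y, ‖G t n y‖ ≤ μ)
    (hp0 : ∀ t ∈ Icc 1 T, ∀ n ∈ N, 0 ≤ p t n)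
    (hp1 : ∀ t ∈ Icc 1 T, ∀ n ∈ N, p t n ≤ 1)
    (hpsum : ∀ t ∈ Icc 1 T, ∑ n ∈ N, p t n = 1)
    (hFg : ∀ t ∈ Icc 1 T, ∀ y, Fg t y = ∑ n ∈ N, p t n * F t n y)
    (hφgrad : ∀ y, HasGradientAt φ (Gφ y) y)
    (hφsc : ∀ y z : EuclideanSpace ℝ (Fin d),
      φ z + ⟪Gφ z, y - z⟫ + (1 / 2) * ‖y - z‖ ^ 2 ≤ φ y)
    (hB : ∀ y z : EuclideanSpace ℝ (Fin d), B y z = φ y - φ z - ⟪Gφ z, y - z⟫)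
    (hBjensen : ∀ (j : ℕ) (z : Fin j → EuclideanSpace ℝ (Fin d)) (w : Fin j → ℝ),
      (∀ i, 0 ≤ w i) → (∀ i, w i ≤ 1) → ∑ i, w i = 1 →
      ∀ u, B u (∑ i, w i • z i) ≤ ∑ i, w i * B u (z i))
    (hlocmin : ∀ t ∈ Icc 1 T, ∀ n ∈ N, ∀ y,
      ⟪G t n (x t), xloc (t + 1) n⟫ + Real.sqrt T * B (xloc (t + 1) n) (x t) ≤
        ⟪G t n (x t), y⟫ + Real.sqrt T * B y (x t))
    (hagg : ∀ t ∈ Icc 1 T, x (t + 1) = ∑ n ∈ N, p t n • xloc (t + 1) n) :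
    ∑ t ∈ Icc 1 T, (Fg t (x t) - Fg t xs) ≤
      Real.sqrt T * B xs (x 1) + μ ^ 2 / 2 * Real.sqrt T := by
  obtain rfl : B = bregman φ Gφ := funext fun y => funext (hB y)
  have hc : 0 < √(T : ℝ) := Real.sqrt_pos.2 (by exact_mod_cast hT)
  have hround : ∀ t ∈ Icc 1 T, Fg t (x t) - Fg t xs ≤
      μ ^ 2 / (2 * √T) + √T * (bregman φ Gφ xs (x t) - bregman φ Gφ xs (x (t + 1))) := by
    intro t ht
    rw [hFg t ht, hFg t ht, ← sum_sub_distrib]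
    simp_rw [← mul_sub]
    refine sum_mul_le_of_le_add_mul_sub (hp0 t ht) (hpsum t ht) hc.le
      (fun n hn => (hconv t ht n hn).sub_le_of_isMinOn_bregman hφgrad hφsc hc
        (hgrad t ht n hn _) (hgradbd t ht n hn _) (fun y _ => hlocmin t ht n hn y) xs) ?_
    rw [hagg t ht]
    exact map_sum_smul_le_of_forall_fin (fun j z w h0 h1 hs => hBjensen j z w h0 h1 hs xs) N
      (hp0 t ht) (hp1 t ht) (hpsum t ht) _
  calc _ ≤ T * (μ ^ 2 / (2 * √T)) + √T * bregman φ Gφ xs (x 1) :=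
        sum_Icc_le_of_le_add_mul_sub hc.le (bregman_nonneg hφsc _ _) hround
    _ = _ := by
        nth_rw 1 [← Real.sq_sqrt (Nat.cast_nonneg T)]
        field_simp
        ring

/-- **FedOMD static regret bound.**
Under the FedOMD setting (convex, differentiable local losses with `μ`-bounded gradients,
convex-combination weights summing to one, a differentiable 1-strongly convex mirror map `φ`
whose Bregman divergence satisfies the averaged convexity assumption, local mirror-descent
updates with learning rate `1/√T` followed by weighted aggregation), the static regret against
the comparator `x^*` (a minimizer of `x ↦ Σ_{t=1}^T F^{(t)}(x)`) satisfies: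
`Σ_{t=1}^T (F^{(t)}(x^{(t)}) − F^{(t)}(x^*)) ≤ √T·B_φ(x^*; x^{(1)}) + (μ²/2)·√T`. -/
theorem fedomd_static_regret
    {d : ℕ} {ι : Type*} (N : Finset ι) (T : ℕ) (hT : 1 ≤ T) (μ : ℝ) (hμ : 0 ≤ μ)
    (F : ℕ → ι → EuclideanSpace ℝ (Fin d) → ℝ)
    (G : ℕ → ι → EuclideanSpace ℝ (Fin d) → EuclideanSpace ℝ (Fin d))
    (p : ℕ → ι → ℝ)
    (Fg : ℕ → EuclideanSpace ℝ (Fin d) → ℝ)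
    (φ : EuclideanSpace ℝ (Fin d) → ℝ)
    (Gφ : EuclideanSpace ℝ (Fin d) → EuclideanSpace ℝ (Fin d))
    (B : EuclideanSpace ℝ (Fin d) → EuclideanSpace ℝ (Fin d) → ℝ)
    (x : ℕ → EuclideanSpace ℝ (Fin d))
    (xloc : ℕ → ι → EuclideanSpace ℝ (Fin d))
    (xs : EuclideanSpace ℝ (Fin d))
    (hconv : ∀ t ∈ Icc 1 T, ∀ n ∈ N, ConvexOn ℝ Set.univ (F t n))
    (hgrad : ∀ t ∈ Icc 1 T, ∀ n ∈ N, ∀ y, HasGradientAt (F t n) (G t n y) y)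
    (hgradbd : ∀ t ∈ Icc 1 T, ∀ n ∈ N, ∀ y, ‖G t n y‖ ≤ μ)
    (hp0 : ∀ t ∈ Icc 1 T, ∀ n ∈ N, 0 ≤ p t n)
    (hp1 : ∀ t ∈ Icc 1 T, ∀ n ∈ N, p t n ≤ 1)
    (hpsum : ∀ t ∈ Icc 1 T, ∑ n ∈ N, p t n = 1)
    (hFg : ∀ t ∈ Icc 1 T, ∀ y, Fg t y = ∑ n ∈ N, p t n * F t n y)
    (hφgrad : ∀ y, HasGradientAt φ (Gφ y) y)
    (hφsc : ∀ y z : EuclideanSpace ℝ (Fin d),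
      φ z + ⟪Gφ z, y - z⟫ + (1 / 2) * ‖y - z‖ ^ 2 ≤ φ y)
    (hB : ∀ y z : EuclideanSpace ℝ (Fin d), B y z = φ y - φ z - ⟪Gφ z, y - z⟫)
    (hBjensen : ∀ (j : ℕ) (z : Fin j → EuclideanSpace ℝ (Fin d)) (w : Fin j → ℝ),
      (∀ i, 0 ≤ w i) → (∀ i, w i ≤ 1) → ∑ i, w i = 1 →
      ∀ u, B u (∑ i, w i • z i) ≤ ∑ i, w i * B u (z i))
    (hlocmin : ∀ t ∈ Icc 1 T, ∀ n ∈ N, ∀ y,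
      ⟪G t n (x t), xloc (t + 1) n⟫ + Real.sqrt T * B (xloc (t + 1) n) (x t) ≤
        ⟪G t n (x t), y⟫ + Real.sqrt T * B y (x t))
    (hagg : ∀ t ∈ Icc 1 T, x (t + 1) = ∑ n ∈ N, p t n • xloc (t + 1) n)
    (hxs : ∀ y, ∑ t ∈ Icc 1 T, Fg t xs ≤ ∑ t ∈ Icc 1 T, Fg t y) :
    ∑ t ∈ Icc 1 T, (Fg t (x t) - Fg t xs) ≤
      Real.sqrt T * B xs (x 1) + μ ^ 2 / 2 * Real.sqrt T :=
  fedomd_static_regret_general N T hT μ F G p Fg φ Gφ B x xloc xs hconv hgrad hgradbd hp0 hp1 hpsum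
    hFg hφgrad hφsc hB hBjensen hlocmin hagg
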